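/- Let S and A be nonempty finite types, γ ∈ (0,1), P a row-stochastic matrix of size |S×A|×|S|, r ∈ ℝ^{S×A}, and ρ₀ ∈ ℝ^S a vector with nonnegative entries summing to 1. For a policy π given by a row-stochastic matrix Π^π of size |S|×|S×A| define P^π = Π^πP, r^π = Π^πr, v^π = (I − γP^π)⁻¹r^π, q^π = r + γPv^π, η(π) = ρ₀ᵀv^π, and ρ^πᵀ = ρ₀ᵀ(I − γP^π)⁻¹; for policies π, π′ define Ā^π_{π'} = (Π^{π'} − Π^π)q^π. Then for any policies π, π′ (targets), β (behavior), and any α ∈ [0,1]: η(π′) − η(π) ≥ α ρ^πᵀ Ā^π_{π'} + (1−α) ρ^βᵀ Ā^π_{π'} − (γ/(1−γ)²) · (α ‖Π^{π'} − Π^π‖∞² + (1−α) ‖Π^{π'} − Π^π‖∞ ‖Π^{π'} − Π^β‖∞) · ‖q^π‖∞. -/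

import Mathlib

open Matrix BigOperators

/-- A matrix is row-stochastic if all entries are nonnegative and every row sums to 1. -/
def IsStochastic {m n : Type*} [Fintype m] [Fintype n] (M : Matrix m n ℝ) : Prop :=
  (∀ i j, 0 ≤ M i j) ∧ ∀ i, ∑ j, M i j = 1

/-- `‖M‖∞`: the maximum over rows of the sum of absolute values of the entries. -/
noncomputable def normInfM {m n : Type*} [Fintype m] [Fintype n] (M : Matrix m n ℝ) : ℝ :=
  ⨆ i, ∑ j, |M i j|

/-- `‖x‖∞`: the maximum absolute entry of a vector. -/
noncomputable def normInfV {n : Type*} [Fintype n] (x : n → ℝ) : ℝ :=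
  ⨆ i, |x i|

/-!
Write `R^μ = (I - γP^μ)⁻¹`. Subtracting the Bellman equations of `π` and `π'` gives
`(I - γP^{π'})(v^{π'} - v^π) = (Π^{π'} - Π^π) q^π`, hence the exact performance difference
`η(π') - η(π) = ρ^{π'}ᵀ Ā^π_{π'}`. It involves the occupancy of the target `π'`; replacing it by the
occupancy of `μ = π` or `μ = β` costs at most `‖R^{π'} - R^μ‖ ‖Ā^π_{π'}‖` in the `ℓ^∞` operator norm.
The resolvent identity `R^{π'} - R^μ = γ R^{π'} (P^{π'} - P^μ) R^μ` together with `‖R^μ‖ ≤ 1/(1-γ)`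
bounds this by `γ/(1-γ)² ‖Π^{π'} - Π^μ‖ ‖Π^{π'} - Π^π‖ ‖q^π‖`, and the theorem is the
`α`-convex combination of the two cases.
-/

attribute [local instance] Matrix.linftyOpNormedAddCommGroup Matrix.linftyOpNormedRing
  Matrix.linftyOpNormedAlgebra

section Norms

variable {m n : Type*} [Fintype m] [Fintype n]

theorem normInfV_eq_norm (x : n → ℝ) : normInfV x = ‖x‖ := by
  rw [Pi.norm_def, Finset.sup_univ_eq_ciSup, NNReal.coe_iSup]
  simp only [coe_nnnorm, Real.norm_eq_abs]
  rfl

theorem normInfM_eq_norm (M : Matrix m n ℝ) : normInfM M = ‖M‖ := by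
  rw [linfty_opNorm_def, Finset.sup_univ_eq_ciSup, NNReal.coe_iSup]
  simp only [NNReal.coe_sum, coe_nnnorm, Real.norm_eq_abs]
  rfl

theorem abs_dotProduct_le_norm {ρ : n → ℝ} (hpos : ∀ i, 0 ≤ ρ i) (hsum : ∑ i, ρ i = 1)
    (y : n → ℝ) : |ρ ⬝ᵥ y| ≤ ‖y‖ :=
  calc |∑ i, ρ i * y i| ≤ ∑ i, |ρ i * y i| := Finset.abs_sum_le_sum_abs _ _
    _ = ∑ i, ρ i * ‖y i‖ := by simp only [abs_mul, abs_of_nonneg (hpos _), Real.norm_eq_abs]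
    _ ≤ ∑ i, ρ i * ‖y‖ := by gcongr with i; exacts [hpos i, norm_le_pi_norm y i]
    _ = ‖y‖ := by rw [← Finset.sum_mul, hsum, one_mul]

end Norms

namespace IsStochastic

variable {m n p : Type*} [Fintype m] [Fintype n] [Fintype p]

theorem mul {M : Matrix m n ℝ} {N : Matrix n p ℝ} (hM : IsStochastic M) (hN : IsStochastic N) :
    IsStochastic (M * N) := by
  refine ⟨fun i j => Finset.sum_nonneg fun k _ => mul_nonneg (hM.1 i k) (hN.1 k j), fun i => ?_⟩
  simp only [mul_apply]
  rw [Finset.sum_comm]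
  simp only [← Finset.mul_sum, hN.2, mul_one, hM.2 i]

theorem one [DecidableEq n] : IsStochastic (1 : Matrix n n ℝ) :=
  ⟨fun i j => by rw [one_apply]; split_ifs <;> norm_num, fun i => by simp [one_apply]⟩

theorem norm_le_one {M : Matrix m n ℝ} (hM : IsStochastic M) : ‖M‖ ≤ 1 := by
  rw [linfty_opNorm_def, NNReal.coe_le_one]
  refine Finset.sup_le fun i _ => ?_
  rw [← NNReal.coe_le_one]
  push_cast
  simp only [Real.norm_eq_abs, abs_of_nonneg (hM.1 i _), hM.2 i, le_refl]

end IsStochastic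

section Resolvent

variable {n : Type*} [Fintype n] [DecidableEq n] {γ : ℝ} {M N : Matrix n n ℝ}

theorem norm_smul_le_of_norm_le_one (hγ0 : 0 ≤ γ) (hM : ‖M‖ ≤ 1) : ‖γ • M‖ ≤ γ := by
  rw [norm_smul, Real.norm_of_nonneg hγ0]
  exact mul_le_of_le_one_right hγ0 hM

theorem isUnit_one_sub_smul (hγ0 : 0 ≤ γ) (hγ1 : γ < 1) (hM : ‖M‖ ≤ 1) :
    IsUnit (1 - γ • M) :=
  isUnit_one_sub_of_norm_lt_one ((norm_smul_le_of_norm_le_one hγ0 hM).trans_lt hγ1)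

theorem norm_inv_one_sub_smul_le (hγ0 : 0 ≤ γ) (hγ1 : γ < 1) (hM : ‖M‖ ≤ 1) :
    ‖(1 - γ • M)⁻¹‖ ≤ (1 - γ)⁻¹ := by
  have hlt : ‖γ • M‖ < 1 := (norm_smul_le_of_norm_le_one hγ0 hM).trans_lt hγ1
  rw [nonsing_inv_eq_ringInverse, ← geom_series_eq_inverse _ hlt]
  calc ‖∑' k, (γ • M) ^ k‖ ≤ ‖(1 : Matrix n n ℝ)‖ - 1 + (1 - ‖γ • M‖)⁻¹ :=
        tsum_geometric_le_of_norm_lt_one _ hlt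
    _ ≤ (1 - γ)⁻¹ := by
        have hone := (IsStochastic.one (n := n)).norm_le_one
        have hinv : (1 - ‖γ • M‖)⁻¹ ≤ (1 - γ)⁻¹ :=
          inv_anti₀ (by linarith) (by linarith [norm_smul_le_of_norm_le_one hγ0 hM])
        linarith

theorem norm_inv_one_sub_smul_sub_inv_le (hγ0 : 0 ≤ γ) (hγ1 : γ < 1) (hM : ‖M‖ ≤ 1)
    (hN : ‖N‖ ≤ 1) :
    ‖(1 - γ • M)⁻¹ - (1 - γ • N)⁻¹‖ ≤ γ / (1 - γ) ^ 2 * ‖M - N‖ := by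
  have hunit : IsUnit (1 - γ • M) ↔ IsUnit (1 - γ • N) :=
    iff_of_true (isUnit_one_sub_smul hγ0 hγ1 hM) (isUnit_one_sub_smul hγ0 hγ1 hN)
  have hmid : (1 - γ • N) - (1 - γ • M) = γ • (M - N) := by module
  rw [inv_sub_inv hunit, hmid]
  calc ‖(1 - γ • M)⁻¹ * γ • (M - N) * (1 - γ • N)⁻¹‖
      ≤ ‖(1 - γ • M)⁻¹‖ * ‖γ • (M - N)‖ * ‖(1 - γ • N)⁻¹‖ := norm_mul₃_le
    _ ≤ (1 - γ)⁻¹ * (γ * ‖M - N‖) * (1 - γ)⁻¹ := by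
        rw [norm_smul, Real.norm_of_nonneg hγ0]
        gcongr
        exacts [norm_inv_one_sub_smul_le hγ0 hγ1 hM, norm_inv_one_sub_smul_le hγ0 hγ1 hN]
    _ = γ / (1 - γ) ^ 2 * ‖M - N‖ := by field_simp

end Resolvent

section MDP

variable {S ι : Type*} [Fintype S] [Fintype ι] [DecidableEq S]

noncomputable def stateValue (γ : ℝ) (P : Matrix ι S ℝ) (r : ι → ℝ) (pol : Matrix S ι ℝ) :
    S → ℝ :=
  (1 - γ • (pol * P))⁻¹ *ᵥ (pol *ᵥ r)

noncomputable def actionValue (γ : ℝ) (P : Matrix ι S ℝ) (r : ι → ℝ) (pol : Matrix S ι ℝ) :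
    ι → ℝ :=
  r + γ • (P *ᵥ stateValue γ P r pol)

noncomputable def occupancy (γ : ℝ) (P : Matrix ι S ℝ) (ρ₀ : S → ℝ) (pol : Matrix S ι ℝ) :
    S → ℝ :=
  ρ₀ ᵥ* (1 - γ • (pol * P))⁻¹

variable {γ : ℝ} {P : Matrix ι S ℝ} {r : ι → ℝ} {pol pol' : Matrix S ι ℝ}

theorem one_sub_smul_mulVec_stateValue (h : IsUnit (1 - γ • (pol * P))) :
    (1 - γ • (pol * P)) *ᵥ stateValue γ P r pol = pol *ᵥ r := by
  rw [stateValue, mulVec_mulVec, mul_nonsing_inv _ ((isUnit_iff_isUnit_det _).mp h), one_mulVec]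

theorem mulVec_actionValue (h : IsUnit (1 - γ • (pol * P))) :
    pol *ᵥ actionValue γ P r pol = stateValue γ P r pol := by
  have hbellman := one_sub_smul_mulVec_stateValue (r := r) h
  rw [sub_mulVec, one_mulVec, smul_mulVec, ← mulVec_mulVec] at hbellman
  rw [actionValue, mulVec_add, mulVec_smul, ← hbellman, sub_add_cancel]

theorem stateValue_sub_stateValue (h : IsUnit (1 - γ • (pol * P)))
    (h' : IsUnit (1 - γ • (pol' * P))) :
    stateValue γ P r pol' - stateValue γ P r pol =
      (1 - γ • (pol' * P))⁻¹ *ᵥ ((pol' - pol) *ᵥ actionValue γ P r pol) := by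
  have hkey : (1 - γ • (pol' * P)) *ᵥ (stateValue γ P r pol' - stateValue γ P r pol) =
      (pol' - pol) *ᵥ actionValue γ P r pol := by
    rw [mulVec_sub, one_sub_smul_mulVec_stateValue h', sub_mulVec pol', mulVec_actionValue h,
      actionValue, mulVec_add, mulVec_smul, mulVec_mulVec, sub_mulVec, one_mulVec, smul_mulVec]
    abel
  rw [← hkey, mulVec_mulVec, nonsing_inv_mul _ ((isUnit_iff_isUnit_det _).mp h'), one_mulVec]

theorem dotProduct_stateValue_sub_dotProduct_stateValue (ρ₀ : S → ℝ)
    (h : IsUnit (1 - γ • (pol * P))) (h' : IsUnit (1 - γ • (pol' * P))) :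
    ρ₀ ⬝ᵥ stateValue γ P r pol' - ρ₀ ⬝ᵥ stateValue γ P r pol =
      occupancy γ P ρ₀ pol' ⬝ᵥ ((pol' - pol) *ᵥ actionValue γ P r pol) := by
  rw [← dotProduct_sub, stateValue_sub_stateValue h h', dotProduct_mulVec, occupancy]

theorem abs_occupancy_dotProduct_sub_le (hγ0 : 0 ≤ γ) (hγ1 : γ < 1) (hP : IsStochastic P)
    (hpol : IsStochastic pol) (hpol' : IsStochastic pol') {ρ₀ : S → ℝ} (hpos : ∀ s, 0 ≤ ρ₀ s)
    (hsum : ∑ s, ρ₀ s = 1) (y : S → ℝ) :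
    |occupancy γ P ρ₀ pol' ⬝ᵥ y - occupancy γ P ρ₀ pol ⬝ᵥ y| ≤
      γ / (1 - γ) ^ 2 * ‖pol' - pol‖ * ‖y‖ := by
  rw [occupancy, occupancy, ← dotProduct_mulVec, ← dotProduct_mulVec, ← dotProduct_sub,
    ← sub_mulVec]
  have hPdiff : ‖pol' * P - pol * P‖ ≤ ‖pol' - pol‖ := by
    rw [← Matrix.sub_mul]
    exact (linfty_opNorm_mul _ _).trans (mul_le_of_le_one_right (norm_nonneg _) hP.norm_le_one)
  calc _ ≤ ‖((1 - γ • (pol' * P))⁻¹ - (1 - γ • (pol * P))⁻¹) *ᵥ y‖ :=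
        abs_dotProduct_le_norm hpos hsum _
    _ ≤ ‖(1 - γ • (pol' * P))⁻¹ - (1 - γ • (pol * P))⁻¹‖ * ‖y‖ := linfty_opNorm_mulVec _ _
    _ ≤ γ / (1 - γ) ^ 2 * ‖pol' * P - pol * P‖ * ‖y‖ := by
        gcongr
        exact norm_inv_one_sub_smul_sub_inv_le hγ0 hγ1 (hpol'.mul hP).norm_le_one
          (hpol.mul hP).norm_le_one
    _ ≤ γ / (1 - γ) ^ 2 * ‖pol' - pol‖ * ‖y‖ := by gcongr

theorem occupancy_dotProduct_mulVec_ge (hγ0 : 0 ≤ γ) (hγ1 : γ < 1) (hP : IsStochastic P)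
    (hpol : IsStochastic pol) (hpol' : IsStochastic pol') {ρ₀ : S → ℝ} (hpos : ∀ s, 0 ≤ ρ₀ s)
    (hsum : ∑ s, ρ₀ s = 1) (D : Matrix S ι ℝ) (q : ι → ℝ) :
    occupancy γ P ρ₀ pol ⬝ᵥ (D *ᵥ q) - γ / (1 - γ) ^ 2 * ‖pol' - pol‖ * (‖D‖ * ‖q‖) ≤
      occupancy γ P ρ₀ pol' ⬝ᵥ (D *ᵥ q) := by
  have hshift := (abs_le.mp <|
    abs_occupancy_dotProduct_sub_le hγ0 hγ1 hP hpol hpol' hpos hsum (D *ᵥ q)).1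
  have hDq : γ / (1 - γ) ^ 2 * ‖pol' - pol‖ * ‖D *ᵥ q‖
      ≤ γ / (1 - γ) ^ 2 * ‖pol' - pol‖ * (‖D‖ * ‖q‖) := by
    gcongr
    exact linfty_opNorm_mulVec _ _
  linarith

end MDP

theorem on_and_off_policy_monotonic_policy_improvement_general
    {S A : Type*} [Fintype S] [Fintype A] [DecidableEq S]
    (γ : ℝ) (hγ : γ ∈ Set.Ioo (0 : ℝ) 1)
    (P : Matrix (S × A) S ℝ) (hP : IsStochastic P)
    (r : S × A → ℝ)
    (ρ₀ : S → ℝ) (hρ₀pos : ∀ s, 0 ≤ ρ₀ s) (hρ₀sum : ∑ s, ρ₀ s = 1)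
    (polπ polπ' polβ : Matrix S (S × A) ℝ)
    (hpolπ : IsStochastic polπ) (hpolπ' : IsStochastic polπ') (hpolβ : IsStochastic polβ)
    (α : ℝ) (hα : α ∈ Set.Icc (0 : ℝ) 1) :
    let Pπ := polπ * P
    let Pπ' := polπ' * P
    let Pβ := polβ * P
    let vπ := (1 - γ • Pπ)⁻¹ *ᵥ (polπ *ᵥ r)
    let vπ' := (1 - γ • Pπ')⁻¹ *ᵥ (polπ' *ᵥ r)
    let qπ := r + γ • (P *ᵥ vπ)
    let Abar := (polπ' - polπ) *ᵥ qπ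
    let ρπ := ρ₀ ᵥ* (1 - γ • Pπ)⁻¹
    let ρβ := ρ₀ ᵥ* (1 - γ • Pβ)⁻¹
    ρ₀ ⬝ᵥ vπ' - ρ₀ ⬝ᵥ vπ ≥
      α * (ρπ ⬝ᵥ Abar) + (1 - α) * (ρβ ⬝ᵥ Abar) -
        γ / (1 - γ) ^ 2 *
          (α * normInfM (polπ' - polπ) ^ 2 +
            (1 - α) * normInfM (polπ' - polπ) * normInfM (polπ' - polβ)) *
          normInfV qπ := by
  obtain ⟨hγ0, hγ1⟩ := hγ
  obtain ⟨hα0, hα1⟩ := hα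
  intro Pπ Pπ' Pβ vπ vπ' qπ Abar ρπ ρβ
  have hunit {pol : Matrix S (S × A) ℝ} (hpol : IsStochastic pol) : IsUnit (1 - γ • (pol * P)) :=
    isUnit_one_sub_smul hγ0.le hγ1 (hpol.mul hP).norm_le_one
  have hη : ρ₀ ⬝ᵥ vπ' - ρ₀ ⬝ᵥ vπ = occupancy γ P ρ₀ polπ' ⬝ᵥ Abar :=
    dotProduct_stateValue_sub_dotProduct_stateValue ρ₀ (hunit hpolπ) (hunit hpolπ')
  -- stated through the `let` names so that `linarith` sees the atoms of the goal
  have hπ : ρπ ⬝ᵥ Abar - _ ≤ _ :=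
    occupancy_dotProduct_mulVec_ge hγ0.le hγ1 hP hpolπ hpolπ' hρ₀pos hρ₀sum (polπ' - polπ) qπ
  have hβ : ρβ ⬝ᵥ Abar - _ ≤ _ :=
    occupancy_dotProduct_mulVec_ge hγ0.le hγ1 hP hpolβ hpolπ' hρ₀pos hρ₀sum (polπ' - polπ) qπ
  rw [normInfM_eq_norm, normInfM_eq_norm, normInfV_eq_norm, ge_iff_le, hη]
  linarith [mul_le_mul_of_nonneg_left hπ hα0, mul_le_mul_of_nonneg_left hβ (sub_nonneg.2 hα1)]

/-- Theorem 1, On- and Off-Policy Monotonic Policy Improvement Guarantee.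
`polπ`, `polπ'`, `polβ` are the policy matrices `Π^π, Π^{π'}, Π^β`:
`η(π′) − η(π) ≥ α ρ^πᵀ Ā^π_{π'} + (1−α) ρ^βᵀ Ā^π_{π'}
  − (γ/(1−γ)²)(α ‖Π^{π'} − Π^π‖∞² + (1−α) ‖Π^{π'} − Π^π‖∞ ‖Π^{π'} − Π^β‖∞)‖q^π‖∞`. -/
theorem on_and_off_policy_monotonic_policy_improvement
    {S A : Type*} [Fintype S] [Fintype A] [Nonempty S] [Nonempty A] [DecidableEq S]
    (γ : ℝ) (hγ : γ ∈ Set.Ioo (0 : ℝ) 1)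
    (P : Matrix (S × A) S ℝ) (hP : IsStochastic P)
    (r : S × A → ℝ)
    (ρ₀ : S → ℝ) (hρ₀pos : ∀ s, 0 ≤ ρ₀ s) (hρ₀sum : ∑ s, ρ₀ s = 1)
    (polπ polπ' polβ : Matrix S (S × A) ℝ)
    (hpolπ : IsStochastic polπ) (hpolπ' : IsStochastic polπ') (hpolβ : IsStochastic polβ)
    (α : ℝ) (hα : α ∈ Set.Icc (0 : ℝ) 1) :
    let Pπ := polπ * P
    let Pπ' := polπ' * P
    let Pβ := polβ * P
    let vπ := (1 - γ • Pπ)⁻¹ *ᵥ (polπ *ᵥ r)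
    let vπ' := (1 - γ • Pπ')⁻¹ *ᵥ (polπ' *ᵥ r)
    let qπ := r + γ • (P *ᵥ vπ)
    let Abar := (polπ' - polπ) *ᵥ qπ
    let ρπ := ρ₀ ᵥ* (1 - γ • Pπ)⁻¹
    let ρβ := ρ₀ ᵥ* (1 - γ • Pβ)⁻¹
    ρ₀ ⬝ᵥ vπ' - ρ₀ ⬝ᵥ vπ ≥
      α * (ρπ ⬝ᵥ Abar) + (1 - α) * (ρβ ⬝ᵥ Abar) -
        γ / (1 - γ) ^ 2 *
          (α * normInfM (polπ' - polπ) ^ 2 +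
            (1 - α) * normInfM (polπ' - polπ) * normInfM (polπ' - polβ)) *
          normInfV qπ :=
  on_and_off_policy_monotonic_policy_improvement_general γ hγ P hP r ρ₀ hρ₀pos hρ₀sum polπ polπ'
    polβ hpolπ hpolπ' hpolβ α hα
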